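/- Let ε be an orientation of Y = H\Σ and let h be a simplicial cochain on Y. Then the antisymmetrization commutes with the simplicial coboundary: δ(a_ε(h)) = a_ε(δh). -/

import Mathlib

/-! Core definitions for formalizing results of D. Osajda,
"A construction of hyperbolic Coxeter groups". -/

open scoped Classical

noncomputable section

/-- A monoid is torsion-free if no element other than `1` has finite order
(the former Mathlib definition). -/
def Monoid.IsTorsionFree (G : Type*) [Monoid G] : Prop :=
  ∀ g : G, g ≠ 1 → ¬IsOfFinOrder g

namespace Osajda

/-! ### Abstract simplicial complexes -/

/-- An abstract simplicial complex on a vertex type `V`. -/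
structure SComplex (V : Type*) where
  faces : Set (Finset V)
  nonempty_of_mem : ∀ {s : Finset V}, s ∈ faces → s.Nonempty
  down_closed : ∀ {s t : Finset V}, s ∈ faces → t ⊆ s → t.Nonempty → t ∈ faces

variable {V : Type*}

namespace SComplex

/-- The vertex set of a simplicial complex. -/
def vertexSet (X : SComplex V) : Set V := {v | ({v} : Finset V) ∈ X.faces}

/-- Two vertices are adjacent if they are distinct and joined by an edge. -/
def Adj (X : SComplex V) (v w : V) : Prop := v ≠ w ∧ ({v, w} : Finset V) ∈ X.faces

lemma Adj.symm {X : SComplex V} {v w : V} (h : X.Adj v w) : X.Adj w v := by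
  refine ⟨h.1.symm, ?_⟩
  rw [Finset.pair_comm]
  exact h.2

/-- A complex is finite if it has finitely many faces. -/
def IsFinite (X : SComplex V) : Prop := X.faces.Finite

/-- A complex is flag if every finite set of vertices that are pairwise joined by
edges spans a simplex. -/
def Flag (X : SComplex V) : Prop :=
  ∀ s : Finset V, s.Nonempty → (∀ v ∈ s, ∀ w ∈ s, v = w ∨ X.Adj v w) → s ∈ X.faces

/-- The full subcomplex spanned by a set `A` of vertices. -/
def fullSub (X : SComplex V) (A : Set V) : SComplex V where
  faces := {s | s ∈ X.faces ∧ (s : Set V) ⊆ A}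
  nonempty_of_mem h := X.nonempty_of_mem h.1
  down_closed h hsub hne :=
    ⟨X.down_closed h.1 hsub hne, subset_trans (Finset.coe_subset.2 hsub) h.2⟩

/-- `Z` is a full subcomplex of `X`. -/
def IsFullSubcomplexOf (Z X : SComplex V) : Prop :=
  Z.faces ⊆ X.faces ∧ ∀ s ∈ X.faces, (s : Set V) ⊆ Z.vertexSet → s ∈ Z.faces

/-- `X` contains a `j`-cycle as a full subcomplex. -/
def HasFullCycle (X : SComplex V) (j : ℕ) : Prop :=
  ∃ f : ZMod j → V, Function.Injective f ∧ (∀ i, X.Adj (f i) (f (i + 1))) ∧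
    (∀ i k : ZMod j, X.Adj (f i) (f k) → k = i + 1 ∨ k = i - 1)

/-- A flag simplicial complex is `k`-large if it has no full `j`-cycles, `4 ≤ j < k`. -/
def Large (X : SComplex V) (k : ℕ) : Prop :=
  X.Flag ∧ ∀ j : ℕ, 4 ≤ j → j < k → ¬ X.HasFullCycle j

/-- The link of a simplex `σ`. -/
def link (X : SComplex V) (σ : Finset V) : SComplex V where
  faces := {τ | τ ∈ X.faces ∧ Disjoint τ σ ∧ τ ∪ σ ∈ X.faces}
  nonempty_of_mem h := X.nonempty_of_mem h.1
  down_closed {s t} h hsub hne := by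
    refine ⟨X.down_closed h.1 hsub hne, Disjoint.mono_left hsub h.2.1, ?_⟩
    exact X.down_closed h.2.2 (Finset.union_subset_union hsub le_rfl)
      (Finset.Nonempty.mono Finset.subset_union_left hne)

/-- A complex is locally `k`-large if the links of all its simplices are `k`-large. -/
def LocallyLarge (X : SComplex V) (k : ℕ) : Prop :=
  ∀ σ ∈ X.faces, (X.link σ).Large k

/-- `X.Reach n v w` : `v` and `w` are at distance at most `n` in the 1-skeleton. -/
def Reach (X : SComplex V) (n : ℕ) (v w : V) : Prop :=
  ∃ p : Fin (n + 1) → V, p 0 = v ∧ p (Fin.last n) = w ∧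
    ∀ i : Fin n, p i.castSucc = p i.succ ∨ X.Adj (p i.castSucc) (p i.succ)

/-- A `k`-wheel `(v₀; f 0, …, f (k-1))` in `X`, as a full subcomplex. -/
def IsWheel (X : SComplex V) (k : ℕ) (v₀ : V) (f : ZMod k → V) : Prop :=
  Function.Injective f ∧ (∀ i, v₀ ≠ f i) ∧ (∀ i, X.Adj (f i) (f (i + 1))) ∧
    (∀ i, X.Adj v₀ (f i)) ∧ (∀ i k', X.Adj (f i) (f k') → k' = i + 1 ∨ k' = i - 1)

/-- The property `SD₂*(k)`. -/
def SD2star (X : SComplex V) (k : ℕ) : Prop :=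
  (¬ ∃ (v₀ : V) (f : ZMod 4 → V), X.IsWheel 4 v₀ f) ∧
  ∀ l : ℕ, 5 ≤ l → l < k → ∀ (v₀ : V) (f : ZMod l → V) (t : V),
    X.IsWheel l v₀ f → ({f 1, f 2, t} : Finset V) ∈ X.faces →
    (∀ i, t ≠ f i) → t ≠ v₀ →
    ∃ v : V, X.Reach 1 v v₀ ∧ (∀ i, X.Reach 1 v (f i)) ∧ X.Reach 1 v t

/-- A flag simplicial complex is weakly systolic if for every vertex `v`, every
`i ≥ 1` and every simplex `σ ⊆ S_{i+1}(v)`, the intersection `X_σ ∩ B_i(v)` is a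
nonempty simplex. -/
def WeaklySystolic (X : SComplex V) : Prop :=
  X.Flag ∧ ∀ v : V, v ∈ X.vertexSet → ∀ i : ℕ, 1 ≤ i → ∀ σ ∈ X.faces,
    (∀ u ∈ σ, X.Reach (i + 1) v u ∧ ¬ X.Reach i v u) →
    ∃ τ ∈ (X.link σ).faces,
      (τ : Set V) = {u | u ∈ (X.link σ).vertexSet ∧ X.Reach i v u}

/-- A complex with `SD₂*(k)` links. -/
def SD2starLinks (X : SComplex V) (k : ℕ) : Prop :=
  X.SD2star k ∧ ∀ σ ∈ X.faces, (X.link σ).SD2star k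

/-- Elementary homotopies of edge paths. -/
inductive HomEq (X : SComplex V) : List V → List V → Prop
  | refl (p : List V) : HomEq X p p
  | symm {p q} : HomEq X p q → HomEq X q p
  | trans {p q r} : HomEq X p q → HomEq X q r → HomEq X p r
  | backtrack (l₁ l₂ : List V) (a b : V) :
      HomEq X (l₁ ++ [a, b, a] ++ l₂) (l₁ ++ [a] ++ l₂)
  | triangle (l₁ l₂ : List V) (a b c : V) :
      ({a, b, c} : Finset V) ∈ X.faces →
      HomEq X (l₁ ++ [a, b, c] ++ l₂) (l₁ ++ [a, c] ++ l₂)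

/-- An edge path in the 1-skeleton. -/
def IsPath (X : SComplex V) (p : List V) : Prop :=
  p ≠ [] ∧ p.Chain' X.Adj ∧ ∀ v ∈ p, v ∈ X.vertexSet

/-- Combinatorial simple connectedness. -/
def SimplyConnected (X : SComplex V) : Prop :=
  (∀ v ∈ X.vertexSet, ∀ w ∈ X.vertexSet, ∃ p : List V,
      X.IsPath p ∧ p.head? = some v ∧ p.getLast? = some w) ∧
  (∀ p : List V, X.IsPath p → p.head? = p.getLast? → ∃ v : V, X.HomEq p [v])

/-- A `k`-systolic complex: flag, simply connected and locally `k`-large. -/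
def Systolic (X : SComplex V) (k : ℕ) : Prop :=
  X.Flag ∧ X.SimplyConnected ∧ X.LocallyLarge k

/-! #### Geometric realization -/

/-- The geometric realization of a simplicial complex, as a subspace of `V → ℝ`. -/
def realization (X : SComplex V) : Type _ :=
  {f : V → ℝ // (∀ v, 0 ≤ f v) ∧
    ∃ s ∈ X.faces, (∀ v, f v ≠ 0 → v ∈ s) ∧ ∑ v ∈ s, f v = 1}

instance (X : SComplex V) : TopologicalSpace X.realization :=
  inferInstanceAs (TopologicalSpace {f : V → ℝ // (∀ v, 0 ≤ f v) ∧
    ∃ s ∈ X.faces, (∀ v, f v ≠ 0 → v ∈ s) ∧ ∑ v ∈ s, f v = 1})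

/-! #### Simplicial cohomology (via ordered cochains) -/

/-- Ordered `n`-simplices: tuples of vertices spanning a simplex. -/
def Tup (X : SComplex V) (n : ℕ) : Type _ :=
  {f : Fin (n + 1) → V // Finset.image f Finset.univ ∈ X.faces}

/-- Simplicial `n`-cochains with coefficients in `R`. -/
abbrev Cochain (X : SComplex V) (n : ℕ) (R : Type*) : Type _ := X.Tup n → R

/-- The `i`-th face of an ordered simplex. -/
def Tup.face {X : SComplex V} {n : ℕ} (t : X.Tup (n + 1)) (i : Fin (n + 2)) :
    X.Tup n :=
  ⟨fun j => t.1 (i.succAbove j), by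
    refine X.down_closed t.2 ?_ ?_
    · intro x hx
      simp only [Finset.mem_image] at hx ⊢
      obtain ⟨j, -, rfl⟩ := hx
      exact ⟨i.succAbove j, Finset.mem_univ _, rfl⟩
    · exact ⟨t.1 (i.succAbove 0), Finset.mem_image_of_mem _ (Finset.mem_univ _)⟩⟩

/-- The simplicial coboundary operator. -/
def coboundary (X : SComplex V) (n : ℕ) {R : Type*} [CommRing R]
    (h : X.Cochain n R) : X.Cochain (n + 1) R :=
  fun t => ∑ i : Fin (n + 2), (-1 : R) ^ (i : ℕ) * h (t.face i)

/-- Being a coboundary (in degree `0` only the zero cochain is a coboundary). -/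
def IsCoboundary (X : SComplex V) {R : Type*} [CommRing R] :
    ∀ {n : ℕ}, X.Cochain n R → Prop
  | 0, f => f = 0
  | (_ + 1), f => ∃ g, X.coboundary _ g = f

/-- `Hⁿ(X; R) ≠ 0`: there is an `n`-cocycle which is not a coboundary. -/
def CohomNontrivial (X : SComplex V) (n : ℕ) (R : Type*) [CommRing R] : Prop :=
  ∃ f : X.Cochain n R, X.coboundary n f = 0 ∧ ¬ X.IsCoboundary f

end SComplex

/-! ### Spheres, balls, asphericity -/

/-- The `n`-sphere: the unit sphere in `ℝ^{n+1}`. -/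
abbrev nSphere (n : ℕ) : Set (EuclideanSpace ℝ (Fin (n + 1))) :=
  Metric.sphere (0 : EuclideanSpace ℝ (Fin (n + 1))) 1

/-- The closed unit ball in `ℝ^{n+1}`. -/
abbrev nBall (n : ℕ) : Set (EuclideanSpace ℝ (Fin (n + 1))) :=
  Metric.closedBall (0 : EuclideanSpace ℝ (Fin (n + 1))) 1

/-- The inclusion of the sphere into the ball. -/
def sphereIncl (n : ℕ) (x : nSphere n) : nBall n :=
  ⟨x.1, Metric.sphere_subset_closedBall x.2⟩

/-- A map of the `n`-sphere into `T` is null-homotopic iff it extends to the ball. -/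
def NullHomotopicIn {n : ℕ} {T : Type*} [TopologicalSpace T]
    (f : C(nSphere n, T)) : Prop :=
  ∃ g : C(nBall n, T), ∀ x : nSphere n, g (sphereIncl n x) = f x

/-- A space is aspherical if all maps of spheres of dimension `≥ 2` into it are
null-homotopic. -/
def Aspherical (T : Type*) [TopologicalSpace T] : Prop :=
  ∀ n : ℕ, 2 ≤ n → ∀ f : C(nSphere n, T), NullHomotopicIn f

/-- A space is strongly hereditarily aspherical (SHA) if every open cover admits a
refining cover such that the union of every nonempty subfamily is aspherical. -/
def SHA (Z : Type*) [TopologicalSpace Z] : Prop :=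
  ∀ U : Set (Set Z), (∀ u ∈ U, IsOpen u) → ⋃₀ U = Set.univ →
    ∃ C : Set (Set Z), ⋃₀ C = Set.univ ∧ (∀ c ∈ C, ∃ u ∈ U, c ⊆ u) ∧
      ∀ D ⊆ C, D.Nonempty → Aspherical ↥(⋃₀ D)

/-- Maps of `n`-spheres vanish at infinity: for each compact `K` there is a larger
compact `L` such that every map of an `n`-sphere into the complement of `L` is
null-homotopic in the complement of `K`. (For `n = 1` this is simple connectedness
at infinity.) -/
def SpheresVanishAtInfinity (T : Type*) [TopologicalSpace T] (n : ℕ) : Prop :=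
  ∀ K : Set T, IsCompact K → ∃ L : Set T, ∃ _ : IsCompact L, ∃ hKL : K ⊆ L,
    ∀ f : C(nSphere n, ↥(Lᶜ)), ∃ g : C(nBall n, ↥(Kᶜ)),
      ∀ x : nSphere n,
        g (sphereIncl n x) = Set.inclusion (Set.compl_subset_compl.2 hKL) (f x)

/-! ### Cubical complexes -/

/-- A cubical complex, presented by the vertex sets of its closed cubes. -/
structure CComplex (V : Type*) where
  cubes : Set (Finset V)
  nonempty_of_mem : ∀ {c : Finset V}, c ∈ cubes → c.Nonempty

namespace CComplex

/-- A labeling of a finite vertex set as a combinatorial `n`-cube whose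
codimension-one faces are again cubes. -/
def IsCubeLabeling (Y : CComplex V) (c : Finset V) (n : ℕ)
    (φ : (Fin n → Bool) → V) : Prop :=
  Function.Injective φ ∧ c = Finset.image φ Finset.univ ∧
    ∀ (i : Fin n) (b : Bool),
      Finset.image φ (Finset.univ.filter fun x => x i = b) ∈ Y.cubes

/-- `Y` is a genuine cubical complex: every cube carries a hypercube structure and
any two intersecting cubes intersect along a single common subcube. -/
def IsCubical (Y : CComplex V) : Prop :=
  (∀ c ∈ Y.cubes, ∃ (n : ℕ) (φ : (Fin n → Bool) → V), Y.IsCubeLabeling c n φ) ∧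
  (∀ c ∈ Y.cubes, ∀ c' ∈ Y.cubes, (c ∩ c').Nonempty → c ∩ c' ∈ Y.cubes)

def vertexSet (Y : CComplex V) : Set V := {v | ({v} : Finset V) ∈ Y.cubes}

def Adj (Y : CComplex V) (v w : V) : Prop := v ≠ w ∧ ({v, w} : Finset V) ∈ Y.cubes

/-- `Y` is finite dimensional: the cardinalities of cubes are bounded. -/
def FiniteDimensional (Y : CComplex V) : Prop := ∃ N : ℕ, ∀ c ∈ Y.cubes, c.card ≤ N

/-- The link of a vertex `v` of a cubical complex. -/
def link (Y : CComplex V) (v : V) : SComplex V where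
  faces := {s | s.Nonempty ∧ (∀ w ∈ s, Y.Adj v w) ∧ ∃ c ∈ Y.cubes, v ∈ c ∧ s ⊆ c}
  nonempty_of_mem h := h.1
  down_closed {s t} h hsub hne := by
    obtain ⟨-, hadj, c, hc, hvc, hsc⟩ := h
    exact ⟨hne, fun w hw => hadj w (hsub hw), c, hc, hvc, subset_trans hsub hsc⟩

/-- A cubical complex is locally `k`-large if all its vertex links are `k`-large. -/
def LocallyLarge (Y : CComplex V) (k : ℕ) : Prop :=
  ∀ v ∈ Y.vertexSet, (Y.link v).Large k

/-- The thickening of a cubical complex: vertices span a simplex iff they are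
contained in a common cube. -/
def thickening (Y : CComplex V) : SComplex V where
  faces := {s | s.Nonempty ∧ ∃ c ∈ Y.cubes, s ⊆ c}
  nonempty_of_mem h := h.1
  down_closed {s t} h hsub hne := by
    obtain ⟨-, c, hc, hsc⟩ := h
    exact ⟨hne, c, hc, subset_trans hsub hsc⟩

/-- The four vertices of a square (2-cube) of `Y`, in cyclic order. -/
def IsSquare (Y : CComplex V) (a b c d : V) : Prop :=
  ({a, b, c, d} : Finset V) ∈ Y.cubes ∧ Y.Adj a b ∧ Y.Adj b c ∧ Y.Adj c d ∧
    Y.Adj d a ∧ ¬ Y.Adj a c ∧ ¬ Y.Adj b d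

/-- Elementary homotopies of edge paths in a cubical complex. -/
inductive HomEq (Y : CComplex V) : List V → List V → Prop
  | refl (p : List V) : HomEq Y p p
  | symm {p q} : HomEq Y p q → HomEq Y q p
  | trans {p q r} : HomEq Y p q → HomEq Y q r → HomEq Y p r
  | backtrack (l₁ l₂ : List V) (a b : V) :
      HomEq Y (l₁ ++ [a, b, a] ++ l₂) (l₁ ++ [a] ++ l₂)
  | square (l₁ l₂ : List V) (a b c d : V) :
      Y.IsSquare a b c d → HomEq Y (l₁ ++ [a, b, c] ++ l₂) (l₁ ++ [a, d, c] ++ l₂)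

/-- An edge path in the 1-skeleton of a cubical complex. -/
def IsPath (Y : CComplex V) (p : List V) : Prop :=
  p ≠ [] ∧ p.Chain' Y.Adj ∧ ∀ v ∈ p, v ∈ Y.vertexSet

/-- Combinatorial simple connectedness of a cubical complex. -/
def SimplyConnected (Y : CComplex V) : Prop :=
  (∀ v ∈ Y.vertexSet, ∀ w ∈ Y.vertexSet, ∃ p : List V,
      Y.IsPath p ∧ p.head? = some v ∧ p.getLast? = some w) ∧
  (∀ p : List V, Y.IsPath p → p.head? = p.getLast? → ∃ v : V, Y.HomEq p [v])

/-- The geometric realization of a cubical complex, as a subspace of `V → ℝ`: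
each point of a cube `[0,1]ⁿ` is recorded by its multilinear (product) weights on
the `2ⁿ` vertices of the cube. -/
def realization (Y : CComplex V) : Type _ :=
  {f : V → ℝ // ∃ c ∈ Y.cubes, ∃ (n : ℕ) (φ : (Fin n → Bool) → V),
    Y.IsCubeLabeling c n φ ∧ (∀ v, f v ≠ 0 → v ∈ c) ∧
    ∃ x : Fin n → ℝ, (∀ i, x i ∈ Set.Icc (0 : ℝ) 1) ∧
      ∀ ε : Fin n → Bool, f (φ ε) = ∏ i, (if ε i then x i else 1 - x i)}

instance (Y : CComplex V) : TopologicalSpace Y.realization :=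
  inferInstanceAs (TopologicalSpace
    {f : V → ℝ // ∃ c ∈ Y.cubes, ∃ (n : ℕ) (φ : (Fin n → Bool) → V),
    Y.IsCubeLabeling c n φ ∧ (∀ v, f v ≠ 0 → v ∈ c) ∧
    ∃ x : Fin n → ℝ, (∀ i, x i ∈ Set.Icc (0 : ℝ) 1) ∧
      ∀ ε : Fin n → Bool, f (φ ε) = ∏ i, (if ε i then x i else 1 - x i)})

end CComplex

/-! ### Groups: word metrics, hyperbolicity, dimension, actions -/

section Groups

variable {G : Type*} [Group G]

/-- Word length of `g` with respect to a (symmetrized) generating set `S`. -/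
def wordLength (S : Set G) (g : G) : ℕ :=
  sInf {n | ∃ l : List G, l.length = n ∧ (∀ x ∈ l, x ∈ S ∨ x⁻¹ ∈ S) ∧ l.prod = g}

/-- The Gromov product with respect to the word metric of `S`. -/
def gromovProd (S : Set G) (x y w : G) : ℝ :=
  ((wordLength S (w⁻¹ * x) : ℝ) + (wordLength S (w⁻¹ * y) : ℝ)
    - (wordLength S (x⁻¹ * y) : ℝ)) / 2

/-- A group is Gromov hyperbolic if for some finite generating set the Gromov
product satisfies the `δ`-hyperbolicity inequality. -/
def GromovHyperbolic (G : Type*) [Group G] : Prop :=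
  ∃ S : Finset G, Subgroup.closure (S : Set G) = ⊤ ∧
    ∃ δ : ℝ, 0 ≤ δ ∧ ∀ x y z w : G,
      min (gromovProd (S : Set G) x z w) (gromovProd (S : Set G) z y w) - δ ≤
        gromovProd (S : Set G) x y w

/-- The cohomological dimension of `G` is at least `n`. -/
def cdGE (G : Type) [Group G] (n : ℕ) : Prop :=
  ∃ m : ℕ, n ≤ m ∧ ∃ M : Rep ℤ G, ¬ Subsingleton (groupCohomology M m)

/-- The virtual cohomological dimension of `G` is at least `n`: some torsion-free
finite-index subgroup has cohomological dimension at least `n`. -/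
def vcdGE (G : Type) [Group G] (n : ℕ) : Prop :=
  ∃ H : Subgroup G, H.FiniteIndex ∧ Monoid.IsTorsionFree H ∧ cdGE H n

/-- A geometric action of `G` on a simplicial complex by simplicial automorphisms:
faces are preserved, there are finitely many orbits of faces, and stabilizers of
faces are finite. -/
def ActsGeometrically (G : Type*) [Group G] {V : Type*} (X : SComplex V) : Prop :=
  ∃ φ : G →* Equiv.Perm V,
    (∀ (g : G) (s : Finset V), s ∈ X.faces ↔ s.image (φ g) ∈ X.faces) ∧
    (∃ F : Finset (Finset V), ∀ s ∈ X.faces, ∃ g : G, s.image (φ g) ∈ F) ∧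
    (∀ s ∈ X.faces, {g : G | s.image (φ g) = s}.Finite)

/-- A `k`-systolic group. -/
def IsSystolicGroup (G : Type*) [Group G] (k : ℕ) : Prop :=
  ∃ (V : Type) (X : SComplex V), X.Systolic k ∧ ActsGeometrically G X

/-- The Rips complex of a subset `A ⊆ G` at scale `δ` (word metric of `S`). -/
def rips (S : Set G) (A : Set G) (δ : ℕ) : SComplex G where
  faces := {s | s.Nonempty ∧ (s : Set G) ⊆ A ∧
    ∀ x ∈ s, ∀ y ∈ s, wordLength S (x⁻¹ * y) ≤ δ}
  nonempty_of_mem h := h.1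
  down_closed {s t} h hsub hne :=
    ⟨hne, subset_trans (Finset.coe_subset.2 hsub) h.2.1,
      fun x hx y hy => h.2.2 x (hsub hx) y (hsub hy)⟩

/-- The inclusion of Rips complexes induced by increasing the scale. -/
def ripsIncl (S : Set G) (A : Set G) {δ δ' : ℕ} (h : δ ≤ δ') :
    C((rips S A δ).realization, (rips S A δ').realization) where
  toFun f := ⟨f.1, f.2.1, by
    obtain ⟨s, hs, h1, h2⟩ := f.2.2
    exact ⟨s, ⟨hs.1, hs.2.1, fun x hx y hy => le_trans (hs.2.2 x hx y hy) h⟩, h1, h2⟩⟩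
  continuous_toFun := Continuous.subtype_mk continuous_subtype_val _

/-- A group is asymptotically hereditarily aspherical (AHA) if, with respect to
any word metric, for every scale `δ` there is a larger scale `δ'` such that for
every subset `A`, spheres of dimension `≥ 2` in the Rips complex of `A` at scale
`δ` contract after inclusion into the Rips complex at scale `δ'`. -/
def IsAHA (G : Type*) [Group G] : Prop :=
  ∀ S : Finset G, Subgroup.closure (S : Set G) = ⊤ →
    ∀ δ : ℕ, 1 ≤ δ → ∃ δ' : ℕ, ∃ h : δ ≤ δ', ∀ A : Set G, ∀ n : ℕ, 2 ≤ n →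
      ∀ f : C(nSphere n, (rips (S : Set G) A δ).realization),
        NullHomotopicIn ((ripsIncl (S : Set G) A h).comp f)

/-- Geodesic rays from the identity in the word metric. -/
def IsGeodesicRay (S : Set G) (r : ℕ → G) : Prop :=
  r 0 = 1 ∧ ∀ i j : ℕ, wordLength S ((r i)⁻¹ * r j) = max i j - min i j

/-- Two rays are asymptotic. -/
def RayRel (S : Set G) (r r' : {r : ℕ → G // IsGeodesicRay S r}) : Prop :=
  ∃ C : ℕ, ∀ i, wordLength S ((r.1 i)⁻¹ * r'.1 i) ≤ C

/-- The Gromov boundary: asymptoty classes of geodesic rays. -/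
def GromovBoundary (S : Set G) : Type _ := Quot (RayRel S)

/-- The topology of the Gromov boundary, generated by the sets of ray classes
having a representative agreeing with a given ray up to time `n`. -/
instance (S : Set G) : TopologicalSpace (GromovBoundary S) :=
  TopologicalSpace.generateFrom
    {U | ∃ (r : {r : ℕ → G // IsGeodesicRay S r}) (n : ℕ),
      U = {ξ : GromovBoundary S | ∃ r' : {r : ℕ → G // IsGeodesicRay S r},
        Quot.mk _ r' = ξ ∧ ∀ i ≤ n, r'.1 i = r.1 i}}

end Groups


/-! ### Coxeter systems, nerves, Davis complexes -/

section Coxeter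

variable {B : Type*} {W : Type*} [Group W] {M : CoxeterMatrix B}

/-- A Coxeter matrix is right-angled if all off-diagonal entries are `2` or `∞`
(`∞` being encoded by `0`). -/
def IsRightAngled (M : CoxeterMatrix B) : Prop :=
  ∀ i j : B, i ≠ j → M i j = 2 ∨ M i j = 0

/-- A subset `T` of the generators is spherical if the special subgroup `W_T`
is finite. -/
def Spherical (cs : CoxeterSystem M W) (T : Finset B) : Prop :=
  (Subgroup.closure (cs.simple '' (T : Set B)) : Set W).Finite

/-- The nerve of a Coxeter system: simplices are the nonempty spherical subsets
of the set of generators. -/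
def nerve (cs : CoxeterSystem M W) : SComplex B where
  faces := {T | T.Nonempty ∧ Spherical cs T}
  nonempty_of_mem h := h.1
  down_closed {_ _} h hsub hne :=
    ⟨hne, h.2.subset (SetLike.coe_subset_coe.2 (Subgroup.closure_mono
      (Set.image_mono (Finset.coe_subset.2 hsub))))⟩

/-- The right-angled Coxeter matrix associated to a simplicial complex:
generators are the vertices, adjacent vertices commute, non-adjacent distinct
vertices generate an infinite dihedral group. -/
def coxMatrixOf (X : SComplex V) : CoxeterMatrix V where
  M := Matrix.of fun s t => if s = t then 1 else if X.Adj s t then 2 else 0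
  isSymm := by
    ext i j
    by_cases h : i = j
    · subst h; rfl
    · by_cases ha : X.Adj i j
      · simp [Matrix.transpose_apply, h, Ne.symm h, ha, ha.symm]
      · have ha' : ¬ X.Adj j i := fun hc => ha hc.symm
        simp [Matrix.transpose_apply, h, Ne.symm h, ha, ha']
  diagonal i := by simp
  off_diagonal i j h := by
    by_cases ha : X.Adj i j <;> simp [h, ha]

lemma isRightAngled_coxMatrixOf (X : SComplex V) :
    IsRightAngled (coxMatrixOf X) := by
  intro i j h
  by_cases ha : X.Adj i j
  · left; simp [coxMatrixOf, h, ha]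
  · right; simp [coxMatrixOf, h, ha]

/-- The right-angled Coxeter group with nerve `X`. -/
def CoxGroup (X : SComplex V) : Type _ := (coxMatrixOf X).Group

instance (X : SComplex V) : Group (CoxGroup X) :=
  inferInstanceAs (Group (coxMatrixOf X).Group)

/-- The canonical Coxeter system on `CoxGroup X`. -/
def coxSys (X : SComplex V) : CoxeterSystem (coxMatrixOf X) (CoxGroup X) :=
  (coxMatrixOf X).toCoxeterSystem

/-- The left coset `w • W_T` of a special subgroup. -/
def cosetSet (cs : CoxeterSystem M W) (w : W) (T : Finset B) : Set W :=
  (w * ·) '' (Subgroup.closure (cs.simple '' (T : Set B)) : Set W)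

/-- The cubes of the Davis complex of a right-angled Coxeter system: the finite
vertex sets that are cosets of spherical special subgroups. -/
def davisCubes (cs : CoxeterSystem M W) : Set (Finset W) :=
  {c | ∃ (w : W) (T : Finset B), Spherical cs T ∧ (c : Set W) = cosetSet cs w T}

/-- The Davis complex as a cubical complex (right-angled case). -/
def davisCC (cs : CoxeterSystem M W) : CComplex W where
  cubes := davisCubes cs
  nonempty_of_mem {c} h := by
    obtain ⟨w, T, _, hc⟩ := h
    have hw : w ∈ (c : Set W) := by
      rw [hc]; exact ⟨1, Subgroup.one_mem _, mul_one w⟩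
    exact ⟨w, hw⟩

/-- The relation identifying `x` with `h * x` for `h ∈ H`. -/
def leftRel (H : Subgroup W) (x y : W) : Prop := ∃ h ∈ H, y = h * x

/-- The quotient `H \ Σ` of the cubical Davis complex by a subgroup `H ≤ W`. -/
def quotCC (cs : CoxeterSystem M W) (H : Subgroup W) :
    CComplex (Quot (leftRel H)) where
  cubes := {c | ∃ d ∈ davisCubes cs, c = d.image (Quot.mk (leftRel H))}
  nonempty_of_mem {c} h := by
    obtain ⟨d, hd, rfl⟩ := h
    exact ((davisCC cs).nonempty_of_mem hd).image _

/-- The minimal displacement of the action of `H` on the thickening of the Davis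
complex is at least `d`. -/
def MinDisplacementGE (cs : CoxeterSystem M W) (H : Subgroup W) (d : ℕ) : Prop :=
  ∀ h ∈ H, h ≠ 1 → ∀ v : W, ¬ ((davisCC cs).thickening).Reach (d - 1) v (h * v)

/-! #### The standard triangulation of the Davis complex, chambers, orientations -/

/-- A spherical coset, i.e. a vertex of the standard triangulation of the Davis
complex. -/
def IsSphericalCoset (cs : CoxeterSystem M W) (A : Set W) : Prop :=
  ∃ (w : W) (T : Finset B), Spherical cs T ∧ A = cosetSet cs w T

/-- Vertices of the standard triangulation of the Davis complex: cosets of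
spherical special subgroups. -/
def DVertex (cs : CoxeterSystem M W) : Type _ := {A : Set W // IsSphericalCoset cs A}

/-- The standard triangulation of the Davis complex: simplices are the finite
chains of spherical cosets ordered by inclusion. -/
def davisSimp (cs : CoxeterSystem M W) : SComplex (DVertex cs) where
  faces := {s | s.Nonempty ∧ ∀ x ∈ s, ∀ y ∈ s, x.1 ⊆ y.1 ∨ y.1 ⊆ x.1}
  nonempty_of_mem h := h.1
  down_closed {_ _} h hsub hne := ⟨hne, fun x hx y hy => h.2 x (hsub hx) y (hsub hy)⟩

/-- The (vertex set of the) chamber `w • K` of the Davis complex: all spherical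
cosets containing `w`. -/
def chamber (cs : CoxeterSystem M W) (w : W) : Set (DVertex cs) := {A | w ∈ A.1}

/-- The action of `H` on spherical cosets. -/
def dleftRel (cs : CoxeterSystem M W) (H : Subgroup W) (A A' : DVertex cs) : Prop :=
  ∃ h ∈ H, A'.1 = (h * ·) '' A.1

/-- Vertices of the quotient `H \ Σ` (standard triangulation). -/
def QVertex (cs : CoxeterSystem M W) (H : Subgroup W) : Type _ :=
  Quot (dleftRel cs H)

/-- The quotient map on vertices. -/
def qmk (cs : CoxeterSystem M W) (H : Subgroup W) : DVertex cs → QVertex cs H :=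
  Quot.mk (dleftRel cs H)

/-- The quotient `H \ Σ` of the standard triangulation of the Davis complex. -/
def quotSimp (cs : CoxeterSystem M W) (H : Subgroup W) :
    SComplex (QVertex cs H) where
  faces := {s | ∃ t ∈ (davisSimp cs).faces, s = t.image (qmk cs H)}
  nonempty_of_mem {s} h := by
    obtain ⟨t, ht, rfl⟩ := h
    exact ((davisSimp cs).nonempty_of_mem ht).image _
  down_closed {s t} h hsub hne := by
    obtain ⟨t₀, ht₀, rfl⟩ := h
    refine ⟨t₀.filter (fun x => qmk cs H x ∈ t), ⟨?_, ?_⟩, ?_⟩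
    · obtain ⟨q, hq⟩ := hne
      obtain ⟨x, hx, hxq⟩ := Finset.mem_image.1 (hsub hq)
      exact ⟨x, Finset.mem_filter.2 ⟨hx, by rw [hxq]; exact hq⟩⟩
    · intro x hx y hy
      exact ht₀.2 x (Finset.filter_subset _ _ hx) y (Finset.filter_subset _ _ hy)
    · ext q
      constructor
      · intro hq
        obtain ⟨x, hx, hxq⟩ := Finset.mem_image.1 (hsub hq)
        exact Finset.mem_image.2 ⟨x, Finset.mem_filter.2 ⟨hx, by rw [hxq]; exact hq⟩, hxq⟩
      · intro hq
        obtain ⟨x, hx, hxq⟩ := Finset.mem_image.1 hq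
        rw [← hxq]
        exact (Finset.mem_filter.1 hx).2

/-- The copy of the chamber `w • K` in the quotient `H \ Σ`. -/
def pchamber (cs : CoxeterSystem M W) (H : Subgroup W) (w : W) :
    Set (QVertex cs H) := qmk cs H '' chamber cs w

/-- The set `𝒦` of copies of the Davis chamber `K` in the quotient `H \ Σ`. -/
def copies (cs : CoxeterSystem M W) (H : Subgroup W) : Set (Set (QVertex cs H)) :=
  Set.range (pchamber cs H)

/-- An orientation of the quotient `H \ Σ`: a choice of sign for each copy of the
chamber, alternating under the generators. -/
def IsOrientation (cs : CoxeterSystem M W) (H : Subgroup W)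
    (ε : Set (QVertex cs H) → ℤ) : Prop :=
  (∀ w : W, ε (pchamber cs H w) = 1 ∨ ε (pchamber cs H w) = -1) ∧
  ∀ (w : W) (s : B), ε (pchamber cs H (cs.simple s * w)) = - ε (pchamber cs H w)

/-- The action of `u ∈ W` on spherical cosets. -/
def wAct (cs : CoxeterSystem M W) (u : W) (A : DVertex cs) : DVertex cs :=
  ⟨(u * ·) '' A.1, by
    obtain ⟨w, T, hT, hA⟩ := A.2
    refine ⟨u * w, T, hT, ?_⟩
    rw [hA]
    unfold cosetSet
    rw [← Set.image_comp]
    congr 1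
    funext x
    simp [Function.comp, mul_assoc]⟩

/-- The action of `u ∈ W` on ordered simplices of the standard triangulation. -/
def tupAct (cs : CoxeterSystem M W) (u : W) {n : ℕ}
    (t : (davisSimp cs).Tup n) : (davisSimp cs).Tup n :=
  ⟨fun j => wAct cs u (t.1 j), by
    have h2 := t.2
    refine ⟨?_, ?_⟩
    · exact ⟨wAct cs u (t.1 0), Finset.mem_image_of_mem _ (Finset.mem_univ _)⟩
    · intro x hx y hy
      obtain ⟨j, -, rfl⟩ := Finset.mem_image.1 hx
      obtain ⟨j', -, rfl⟩ := Finset.mem_image.1 hy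
      have := h2.2 (t.1 j) (Finset.mem_image_of_mem _ (Finset.mem_univ _))
        (t.1 j') (Finset.mem_image_of_mem _ (Finset.mem_univ _))
      rcases this with h | h
      · exact Or.inl (Set.image_mono h)
      · exact Or.inr (Set.image_mono h)⟩

/-- The image in the quotient `H \ Σ` of an ordered simplex of `Σ`. -/
def ptup (cs : CoxeterSystem M W) (H : Subgroup W) {n : ℕ}
    (t : (davisSimp cs).Tup n) : (quotSimp cs H).Tup n :=
  ⟨fun j => qmk cs H (t.1 j), by
    refine ⟨Finset.image t.1 Finset.univ, t.2, ?_⟩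
    rw [Finset.image_image]
    rfl⟩

/-- An ordered simplex of `Σ` lies in the fundamental chamber `K` iff each of its
vertices is a coset containing `1`. -/
def InChamberK (cs : CoxeterSystem M W) {n : ℕ} (t : (davisSimp cs).Tup n) : Prop :=
  ∀ j, (1 : W) ∈ (t.1 j).1

/-- The Davis chamber `K`, as the full subcomplex of the standard triangulation
spanned by the cosets containing `1`. -/
def chamberK (cs : CoxeterSystem M W) : SComplex (DVertex cs) :=
  (davisSimp cs).fullSub {A : DVertex cs | (1 : W) ∈ A.1}

/-- The subcomplex `K^S = ⋃_{s ∈ S} K_s` of the Davis chamber: faces of simplices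
of `K` whose minimum vertex is `{1, s}` for a generator `s`. -/
def inKS (cs : CoxeterSystem M W) (t : Finset (DVertex cs)) : Prop :=
  ∃ t' ∈ (chamberK cs).faces, t ⊆ t' ∧
    ∃ s : B, ∃ A ∈ t', A.1 = {(1 : W), cs.simple s} ∧ ∀ A' ∈ t', A.1 ⊆ A'.1

end Coxeter

/-! ### The basic construction -/

/-- A bundled simplicial complex. -/
structure BCpx where
  V : Type
  X : SComplex V

/-- One step of the basic construction with displacement parameter `d`: pass from
a complex `X` to the thickening of the quotient of the Davis complex of the
right-angled Coxeter group with nerve `X` by a torsion-free finite-index subgroup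
whose minimal displacement on the thickened Davis complex is at least `d` and
whose quotient admits an orientation. -/
def stepRel (d : ℕ) (A A' : BCpx) : Prop :=
  ∃ H : Subgroup (CoxGroup A.X), H.FiniteIndex ∧ Monoid.IsTorsionFree H ∧
    MinDisplacementGE (coxSys A.X) H d ∧
    (∃ ε, IsOrientation (coxSys A.X) H ε) ∧
    A' = ⟨Quot (leftRel H), (quotCC (coxSys A.X) H).thickening⟩

/-- `k` iterations of the basic construction (with displacement parameter `d`). -/
def iterSteps (d : ℕ) : ℕ → BCpx → BCpx → Prop
  | 0, A, A' => A' = A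
  | (k + 1), A, A' => ∃ Amid : BCpx, stepRel d A Amid ∧ iterSteps d k Amid A'

/-- The result of the basic construction: some number of iterations. -/
def BasicConstruction (A A' : BCpx) : Prop := ∃ k : ℕ, iterSteps 5 k A A'

end Osajda
namespace Osajda

variable {B W : Type*} [Group W] {M : CoxeterMatrix B}

/-- The antisymmetrization sum `a(ε,h,σ) = Σ_{K' ∈ 𝒦} ε(K') · h(p(w_{K'} σ))`,
where `r` chooses for each copy `K'` of the chamber an element `w_{K'} ∈ W` with
`p(w_{K'} K) = K'`. -/
def aSum (cs : CoxeterSystem M W) (H : Subgroup W)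
    (ε : Set (QVertex cs H) → ℤ) (r : Set (QVertex cs H) → W) {n : ℕ}
    (h : (quotSimp cs H).Cochain n ℚ) (σ : (davisSimp cs).Tup n) : ℚ :=
  ∑ᶠ K' ∈ copies cs H, (ε K' : ℚ) * h (ptup cs H (tupAct cs (r K') σ))

/-- `r` is a choice of representatives: for each copy of the chamber it picks an
element of `W` mapping the fundamental chamber onto that copy. -/
def IsChamberChoice (cs : CoxeterSystem M W) (H : Subgroup W)
    (r : Set (QVertex cs H) → W) : Prop :=
  ∀ w : W, pchamber cs H (r (pchamber cs H w)) = pchamber cs H w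

/-- `a` is the antisymmetrization `a_ε(h)` of the cochain `h`:
`a_ε(h)(p(wσ)) = (ε(wK)/|𝒦|) · a(ε,h,σ)` for every `w ∈ W` and every ordered
simplex `σ` of the fundamental chamber `K`. -/
def IsAntisym (cs : CoxeterSystem M W) (H : Subgroup W)
    (ε : Set (QVertex cs H) → ℤ) (r : Set (QVertex cs H) → W) {n : ℕ}
    (h a : (quotSimp cs H).Cochain n ℚ) : Prop :=
  ∀ (w : W) (σ : (davisSimp cs).Tup n), InChamberK cs σ →
    a (ptup cs H (tupAct cs w σ)) =
      ((ε (pchamber cs H w) : ℚ) / (Nat.card ↥(copies cs H) : ℚ)) *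
        aSum cs H ε r h σ

end Osajda

/-! Every simplex of `Y` is the image `p(wσ)` of a simplex `σ` of `K`, so a cochain
satisfying the defining identity of `a_ε(h)` is unique. Translation, projection and taking
faces commute, and the sum over the finitely many copies of `K` commutes with the alternating
sum over faces; hence `δ(a_ε(h))` satisfies the defining identity of `a_ε(δh)`. -/

namespace Osajda

lemma exists_forall_le_of_comparable {ι α : Type*} [Fintype ι] [Nonempty ι] [Preorder α]
    (f : ι → α) (hf : ∀ i j, f i ≤ f j ∨ f j ≤ f i) : ∃ i, ∀ j, f i ≤ f j := by
  obtain ⟨i, hi⟩ := Finset.univ.exists_minimalFor f Finset.univ_nonempty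
  exact ⟨i, fun j => (hf i j).elim id (hi.le_of_le (Finset.mem_univ j))⟩

section DavisComplex

variable {B W : Type*} [Group W] {M : CoxeterMatrix B}

section Action

variable (cs : CoxeterSystem M W)

lemma DVertex.nonempty (A : DVertex cs) : A.1.Nonempty := by
  obtain ⟨w, T, -, hA⟩ := A.2
  exact ⟨w, hA ▸ ⟨1, Subgroup.one_mem _, mul_one w⟩⟩

lemma wAct_wAct (u v : W) (A : DVertex cs) :
    wAct cs u (wAct cs v A) = wAct cs (u * v) A :=
  Subtype.ext <| by simp only [wAct, Set.image_image, mul_assoc]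

lemma wAct_one (A : DVertex cs) : wAct cs 1 A = A :=
  Subtype.ext <| by simp only [wAct, one_mul, Set.image_id']

lemma tupAct_tupAct (u v : W) {n : ℕ} (t : (davisSimp cs).Tup n) :
    tupAct cs u (tupAct cs v t) = tupAct cs (u * v) t :=
  Subtype.ext <| funext fun j => wAct_wAct cs u v (t.1 j)

lemma tupAct_one {n : ℕ} (t : (davisSimp cs).Tup n) : tupAct cs 1 t = t :=
  Subtype.ext <| funext fun j => wAct_one cs (t.1 j)

lemma tupAct_face (u : W) {n : ℕ} (t : (davisSimp cs).Tup (n + 1)) (i : Fin (n + 2)) :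
    (tupAct cs u t).face i = tupAct cs u (t.face i) :=
  rfl

lemma chamber_mul (u w : W) : chamber cs (u * w) = wAct cs u '' chamber cs w := by
  ext A
  refine ⟨fun hA => ⟨wAct cs u⁻¹ A, ⟨u * w, hA, inv_mul_cancel_left u w⟩, ?_⟩, ?_⟩
  · rw [wAct_wAct, mul_inv_cancel, wAct_one]
  · rintro ⟨A, hA, rfl⟩
    exact ⟨w, hA, rfl⟩

/-- Every ordered simplex of `Σ` is a translate of an ordered simplex of the chamber `K`:
its vertices form a chain of cosets, and any element of the smallest one lies in all. -/
lemma exists_eq_tupAct_inChamberK {n : ℕ} (t : (davisSimp cs).Tup n) :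
    ∃ (w : W) (σ : (davisSimp cs).Tup n), InChamberK cs σ ∧ t = tupAct cs w σ := by
  obtain ⟨i₀, hi₀⟩ := exists_forall_le_of_comparable (fun j => (t.1 j).1) fun i j =>
    t.2.2 _ (Finset.mem_image_of_mem _ (Finset.mem_univ i)) _
      (Finset.mem_image_of_mem _ (Finset.mem_univ j))
  obtain ⟨w, hw⟩ := DVertex.nonempty cs (t.1 i₀)
  refine ⟨w, tupAct cs w⁻¹ t, fun j => ⟨w, hi₀ j hw, inv_mul_cancel w⟩, ?_⟩
  rw [tupAct_tupAct, mul_inv_cancel, tupAct_one]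

end Action

section Quotient

variable (cs : CoxeterSystem M W) (H : Subgroup W)

lemma ptup_face {n : ℕ} (t : (davisSimp cs).Tup (n + 1)) (i : Fin (n + 2)) :
    (ptup cs H t).face i = ptup cs H (t.face i) :=
  rfl

lemma qmk_wAct {g : W} (hg : g ∈ H) (A : DVertex cs) : qmk cs H (wAct cs g A) = qmk cs H A :=
  (Quot.sound ⟨g, hg, rfl⟩).symm

lemma pchamber_mul_of_mem {g : W} (hg : g ∈ H) (w : W) :
    pchamber cs H (g * w) = pchamber cs H w := by
  rw [pchamber, chamber_mul, Set.image_image]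
  exact Set.image_congr fun A _ => qmk_wAct cs H hg A

lemma copies_finite [H.FiniteIndex] : (copies cs H).Finite := by
  refine (Set.finite_range fun q : W ⧸ H => pchamber cs H q.out⁻¹).subset ?_
  rintro _ ⟨w, rfl⟩
  obtain ⟨g, hg⟩ := QuotientGroup.mk_out_eq_mul H w⁻¹
  refine ⟨((w⁻¹ : W) : W ⧸ H), ?_⟩
  simp only [hg, mul_inv_rev, inv_inv]
  exact pchamber_mul_of_mem cs H (inv_mem g.2) w

lemma exists_ptup_eq {n : ℕ} (τ : (quotSimp cs H).Tup n) :
    ∃ t : (davisSimp cs).Tup n, ptup cs H t = τ := by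
  obtain ⟨t₀, ht₀, himg⟩ := τ.2
  have hlift : ∀ j, ∃ x ∈ t₀, qmk cs H x = τ.1 j := fun j =>
    Finset.mem_image.1 (himg ▸ Finset.mem_image_of_mem _ (Finset.mem_univ j))
  choose x hxt hx using hlift
  have hface : Finset.image x Finset.univ ∈ (davisSimp cs).faces :=
    (davisSimp cs).down_closed ht₀ (by simpa [Finset.image_subset_iff] using hxt)
      ⟨x 0, Finset.mem_image_of_mem _ (Finset.mem_univ _)⟩
  exact ⟨⟨x, hface⟩, Subtype.ext (funext hx)⟩

lemma exists_eq_ptup_tupAct_inChamberK {n : ℕ} (τ : (quotSimp cs H).Tup n) :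
    ∃ (w : W) (σ : (davisSimp cs).Tup n), InChamberK cs σ ∧ τ = ptup cs H (tupAct cs w σ) := by
  obtain ⟨t, rfl⟩ := exists_ptup_eq cs H τ
  obtain ⟨w, σ, hσ, rfl⟩ := exists_eq_tupAct_inChamberK cs t
  exact ⟨w, σ, hσ, rfl⟩

end Quotient

section Antisymmetrization

variable {cs : CoxeterSystem M W} {H : Subgroup W} {ε : Set (QVertex cs H) → ℤ}
  {r : Set (QVertex cs H) → W}

lemma aSum_coboundary (hfin : (copies cs H).Finite) {n : ℕ} (h : (quotSimp cs H).Cochain n ℚ)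
    (σ : (davisSimp cs).Tup (n + 1)) :
    aSum cs H ε r ((quotSimp cs H).coboundary n h) σ =
      ∑ i : Fin (n + 2), (-1 : ℚ) ^ (i : ℕ) * aSum cs H ε r h (σ.face i) := by
  simp only [aSum, finsum_mem_eq_finite_toFinset_sum _ hfin, SComplex.coboundary, ptup_face,
    tupAct_face, Finset.mul_sum]
  rw [Finset.sum_comm]
  exact Finset.sum_congr rfl fun _ _ => Finset.sum_congr rfl fun _ _ => by ring

lemma IsAntisym.coboundary (hfin : (copies cs H).Finite) {n : ℕ}
    {h a : (quotSimp cs H).Cochain n ℚ} (ha : IsAntisym cs H ε r h a) :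
    IsAntisym cs H ε r ((quotSimp cs H).coboundary n h) ((quotSimp cs H).coboundary n a) := by
  intro w σ hσ
  rw [aSum_coboundary hfin, Finset.mul_sum]
  refine Finset.sum_congr rfl fun i _ => ?_
  rw [ptup_face, tupAct_face, ha w _ fun j => hσ _]
  ring

lemma IsAntisym.unique {n : ℕ} {h a a' : (quotSimp cs H).Cochain n ℚ}
    (ha : IsAntisym cs H ε r h a) (ha' : IsAntisym cs H ε r h a') : a = a' := by
  funext τ
  obtain ⟨w, σ, hσ, rfl⟩ := exists_eq_ptup_tupAct_inChamberK cs H τ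
  rw [ha w σ hσ, ha' w σ hσ]

end Antisymmetrization

end DavisComplex

theorem statement12_general {B W : Type*} [Group W] {M : CoxeterMatrix B}
    (cs : CoxeterSystem M W)
    (H : Subgroup W) (hfi : H.FiniteIndex)
    (ε : Set (QVertex cs H) → ℤ)
    (r : Set (QVertex cs H) → W)
    (n : ℕ) (h : (quotSimp cs H).Cochain n ℚ)
    (a : (quotSimp cs H).Cochain n ℚ) (ha : IsAntisym cs H ε r h a)
    (b : (quotSimp cs H).Cochain (n + 1) ℚ)
    (hb : IsAntisym cs H ε r ((quotSimp cs H).coboundary n h) b) :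
    (quotSimp cs H).coboundary n a = b :=
  (ha.coboundary (copies_finite cs H)).unique hb

/-- Lemma 4.5(1). Let `ε` be an orientation of `Y = H\Σ` and
let `h` be a simplicial cochain on `Y`. Then antisymmetrization commutes with the
simplicial coboundary: `δ(a_ε(h)) = a_ε(δh)`. -/
theorem statement12 {B W : Type*} [Group W] {M : CoxeterMatrix B}
    (cs : CoxeterSystem M W) (hra : IsRightAngled M)
    (H : Subgroup W) (hfi : H.FiniteIndex) (htf : Monoid.IsTorsionFree H)
    (ε : Set (QVertex cs H) → ℤ) (hε : IsOrientation cs H ε)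
    (r : Set (QVertex cs H) → W) (hr : IsChamberChoice cs H r)
    (n : ℕ) (h : (quotSimp cs H).Cochain n ℚ)
    (a : (quotSimp cs H).Cochain n ℚ) (ha : IsAntisym cs H ε r h a)
    (b : (quotSimp cs H).Cochain (n + 1) ℚ)
    (hb : IsAntisym cs H ε r ((quotSimp cs H).coboundary n h) b) :
    (quotSimp cs H).coboundary n a = b :=
  statement12_general cs H hfi ε r n h a ha b hb

end Osajda
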